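/- Let a < b be real numbers and let x : (a,b) → ℝ^n be a function with x(t) ≠ 0 for all t ∈ (a,b), satisfying s_c^+(x(t)) ≤ s_c^-(x(t₀)) for all a < t₀ < t < b. If x(t₀) ∉ V_c for some t₀ ∈ (a,b), then s_c^+(x(t)) < s_c^+(x(t₀)) for all t ∈ (t₀, b); consequently, the set {t ∈ (a,b) : x(t) ∉ V_c} contains at most ⌊n/2⌋ points. -/

import Mathlib

/-!
Always `s_c⁻ ≤ s_c⁺`, so at a point `t₀` with `x(t₀) ∉ V_c` the hypothesis gives
`s_c⁺(x(t)) ≤ s_c⁻(x(t₀)) < s_c⁺(x(t₀))` for `t > t₀`. Hence `s_c⁺ ∘ x` is strictly decreasing on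
the exceptional set, where it takes even values in `[2, n]`: there are at most `⌊n/2⌋` of them.
-/

/-- Number of sign changes in a list of reals: the number of adjacent pairs
with strictly negative product. -/
noncomputable def signChanges : List ℝ → ℕ
  | a :: b :: l => (if a * b < 0 then 1 else 0) + signChanges (b :: l)
  | _ => 0

/-- `s⁻` of a list: sign changes after deleting all zero entries. -/
noncomputable def sMinusList (l : List ℝ) : ℕ :=
  signChanges (l.filter (fun a => decide (a ≠ 0)))

/-- `s⁻(x)`: the number of sign changes in `x` after deleting all zero entries. -/
noncomputable def sMinus {n : ℕ} (x : Fin n → ℝ) : ℕ :=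
  sMinusList (List.ofFn x)

/-- Replace each zero entry of `x` by `1` or `-1` according to `ε`. -/
noncomputable def replZeros {n : ℕ} (x : Fin n → ℝ) (ε : Fin n → Bool) : Fin n → ℝ :=
  fun i => if x i = 0 then (if ε i then 1 else -1) else x i

/-- `s⁺(x)`: the maximal number of sign changes over all replacements of the
zero entries of `x` by `±1`. -/
noncomputable def sPlus {n : ℕ} (x : Fin n → ℝ) : ℕ :=
  Finset.univ.sup fun ε : Fin n → Bool => signChanges (List.ofFn (replZeros x ε))

/-- The cyclically rotated vector `[x i, …, x (n-1), x 0, …, x i]` (of length `n+1`),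
as a list. -/
noncomputable def rotList {n : ℕ} (x : Fin n → ℝ) (i : Fin n) : List ℝ :=
  (List.ofFn x).rotate i.val ++ [x i]

/-- The cyclic sign variation count `s_c⁻(x)`: the maximum of `s⁻` over all
cyclic rotations `[x i, …, x (n-1), x 0, …, x i]`. -/
noncomputable def sMinusC {n : ℕ} (x : Fin n → ℝ) : ℕ :=
  Finset.univ.sup fun i : Fin n => sMinusList (rotList x i)

/-- The cyclic sign variation count `s_c⁺(x)`: the maximum of `s⁺` over all
cyclic rotations, where the two copies of the entry `x i` at the two ends of a
rotation are replaced by the same sign. -/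
noncomputable def sPlusC {n : ℕ} (x : Fin n → ℝ) : ℕ :=
  Finset.univ.sup fun p : (Fin n → Bool) × Fin n =>
    signChanges (rotList (replZeros x p.1) p.2)

/-- `A` is strictly sign-regular of order `k` (`SSR_k`): all `k×k` minors are
nonzero and have the same sign. -/
def SSRof {n m : ℕ} (A : Matrix (Fin n) (Fin m) ℝ) (k : ℕ) : Prop :=
  (∀ (α : Fin k → Fin n) (β : Fin k → Fin m), StrictMono α → StrictMono β →
      0 < (A.submatrix α β).det) ∨
  (∀ (α : Fin k → Fin n) (β : Fin k → Fin m), StrictMono α → StrictMono β →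
      (A.submatrix α β).det < 0)

/-- `A` is sign-regular of order `k` (`SR_k`): all `k×k` minors have the same
non-strict sign. -/
def SRof {n m : ℕ} (A : Matrix (Fin n) (Fin m) ℝ) (k : ℕ) : Prop :=
  (∀ (α : Fin k → Fin n) (β : Fin k → Fin m), StrictMono α → StrictMono β →
      0 ≤ (A.submatrix α β).det) ∨
  (∀ (α : Fin k → Fin n) (β : Fin k → Fin m), StrictMono α → StrictMono β →
      (A.submatrix α β).det ≤ 0)

/-- A square matrix is Metzler if all its off-diagonal entries are nonnegative. -/
def IsMetzler {n : ℕ} (A : Matrix (Fin n) (Fin n) ℝ) : Prop :=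
  ∀ i j : Fin n, i ≠ j → 0 ≤ A i j

/-- A square matrix is irreducible if the directed graph with an edge from `i`
to `j` whenever `i ≠ j` and `A i j ≠ 0` is strongly connected. -/
def IsIrreducibleMatrix {n : ℕ} (A : Matrix (Fin n) (Fin n) ℝ) : Prop :=
  ∀ i j : Fin n, i ≠ j → Relation.TransGen (fun p q : Fin n => p ≠ q ∧ A p q ≠ 0) i j

/-- Membership in `Q`: Metzler, and the nonzero entries lie only on the main
diagonal, the super- and sub-diagonals, and the corner positions `(1,n)`, `(n,1)`
(in 0-indexed form: `(0, n-1)` and `(n-1, 0)`). -/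
def memQ {n : ℕ} (A : Matrix (Fin n) (Fin n) ℝ) : Prop :=
  IsMetzler A ∧ ∀ i j : Fin n, A i j ≠ 0 →
    ((i : ℕ) = (j : ℕ) ∨ (j : ℕ) = (i : ℕ) + 1 ∨ (i : ℕ) = (j : ℕ) + 1 ∨
      ((i : ℕ) = 0 ∧ (j : ℕ) = n - 1) ∨ ((i : ℕ) = n - 1 ∧ (j : ℕ) = 0))

/-- Membership in `Q⁺`: in `Q` and irreducible. -/
def memQplus {n : ℕ} (A : Matrix (Fin n) (Fin n) ℝ) : Prop :=
  memQ A ∧ IsIrreducibleMatrix A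

/-- `P` is the permutation matrix of a cyclic shift `j ↦ j + k (mod n)`. -/
def IsCyclicPermMatrix {n : ℕ} (P : Matrix (Fin n) (Fin n) ℝ) : Prop :=
  ∃ k : ℕ, ∀ i j : Fin n, P i j = if (j : ℕ) % n = ((i : ℕ) + k) % n then 1 else 0

theorem signChanges_le_length_sub_one : ∀ l : List ℝ, signChanges l ≤ l.length - 1
  | [] | [_] => by simp [signChanges]
  | a :: b :: l => by
    have := signChanges_le_length_sub_one (b :: l)
    simp only [signChanges, List.length_cons] at *
    split <;> omega

theorem signChanges_le_cons (a : ℝ) (l : List ℝ) : signChanges l ≤ signChanges (a :: l) := by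
  cases l with
  | nil => simp [signChanges]
  | cons b l => simp only [signChanges]; omega

/-- If `a * c < 0`, then `b ≠ 0` differs in sign from `a` or from `c`. -/
theorem signChanges_cons_le_cons_cons (a : ℝ) {b : ℝ} (hb : b ≠ 0) (l : List ℝ) :
    signChanges (a :: l) ≤ signChanges (a :: b :: l) := by
  cases l with
  | nil => simp [signChanges]
  | cons c l =>
    have : a * c < 0 → a * b < 0 ∨ b * c < 0 := fun hac => by
      by_contra! hpos
      nlinarith [mul_nonneg hpos.1 hpos.2, mul_pos (mul_self_pos.mpr hb) (neg_pos.mpr hac)]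
    simp only [signChanges]
    split_ifs <;> first | omega | (exfalso; tauto)

theorem signChanges_cons_mono {l₁ l₂ : List ℝ} (h : l₁.Sublist l₂) (hl₂ : ∀ x ∈ l₂, x ≠ 0)
    (a : ℝ) : signChanges (a :: l₁) ≤ signChanges (a :: l₂) := by
  induction h generalizing a with
  | slnil => rfl
  | @cons l₁ l₂ b _ ih =>
    calc signChanges (a :: l₁) ≤ signChanges (a :: l₂) := ih (fun x hx => hl₂ x (.tail _ hx)) a
      _ ≤ signChanges (a :: b :: l₂) := signChanges_cons_le_cons_cons a (hl₂ b (.head _)) l₂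
  | @cons_cons l₁ l₂ b _ ih =>
    simp only [signChanges]
    exact Nat.add_le_add_left (ih (fun x hx => hl₂ x (.tail _ hx)) b) _

theorem signChanges_mono {l₁ l₂ : List ℝ} (h : l₁.Sublist l₂) (hl₂ : ∀ x ∈ l₂, x ≠ 0) :
    signChanges l₁ ≤ signChanges l₂ := by
  induction h with
  | slnil => rfl
  | @cons l₁ l₂ b _ ih =>
    exact (ih fun x hx => hl₂ x (.tail _ hx)).trans (signChanges_le_cons b l₂)
  | @cons_cons l₁ l₂ b h _ => exact signChanges_cons_mono h (fun x hx => hl₂ x (.tail _ hx)) b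

section

open SignType

theorem neg_one_pow_signChanges :
    ∀ (l : List ℝ) (hl : l ≠ []), (∀ x ∈ l, x ≠ 0) →
      (-1 : SignType) ^ signChanges l = sign (l.head hl) * sign (l.getLast hl)
  | [a], _, hl => by simp [signChanges, ← sign_mul, sign_pos (mul_self_pos.mpr (hl a (.head _)))]
  | a :: b :: l, _, hl => by
    have ha := hl a (.head _)
    have hb := hl b (.tail _ (.head _))
    have hstep : (-1 : SignType) ^ (if a * b < 0 then 1 else 0) = sign a * sign b := by
      rw [← sign_mul]
      split_ifs with hab
      · rw [sign_neg hab, pow_one]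
      · rw [sign_pos ((not_lt.mp hab).lt_of_ne (mul_ne_zero ha hb).symm), pow_zero]
    have hsq : sign b * sign b = 1 := by
      rw [← sign_mul, sign_pos (mul_self_pos.mpr hb)]
    rw [signChanges, pow_add, hstep,
      neg_one_pow_signChanges (b :: l) (List.cons_ne_nil b l) fun x hx => hl x (.tail _ hx),
      List.getLast_cons_cons, List.head_cons, List.head_cons, mul_assoc, ← mul_assoc (sign b), hsq,
      one_mul]

theorem even_signChanges_of_head_eq_getLast {l : List ℝ} (hl : l ≠ []) (hl₀ : ∀ x ∈ l, x ≠ 0)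
    (h : l.head hl = l.getLast hl) : Even (signChanges l) := by
  have hsq : sign (l.head hl) * sign (l.head hl) = 1 := by
    rw [← sign_mul, sign_pos (mul_self_pos.mpr (hl₀ _ (List.head_mem hl)))]
  rw [← neg_one_pow_eq_one_iff_even (by decide : (-1 : SignType) ≠ 1),
    neg_one_pow_signChanges l hl hl₀, ← h, hsq]

end

theorem List.filter_ne_zero_sublist_map {l : List ℝ} {f : ℝ → ℝ} (hf : ∀ v, v ≠ 0 → f v = v) :
    (l.filter fun v => decide (v ≠ 0)).Sublist (l.map f) := by
  have hfix : (l.filter fun v => decide (v ≠ 0)).map f = l.filter fun v => decide (v ≠ 0) :=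
    (List.map_congr_left fun v hv => hf v (of_decide_eq_true (List.mem_filter.mp hv).2)).trans
      (List.map_id _)
  exact hfix ▸ (List.filter_sublist).map f

section rotList

variable {n : ℕ} (y : Fin n → ℝ) (i : Fin n)

theorem length_rotList : (rotList y i).length = n + 1 := by
  simp [rotList]

theorem rotList_ne_nil : rotList y i ≠ [] := by
  simp [rotList]

theorem forall_mem_rotList {p : ℝ → Prop} (hp : ∀ j, p (y j)) : ∀ v ∈ rotList y i, p v := by
  intro v hv
  rcases List.mem_append.mp hv with hv | hv
  · obtain ⟨j, rfl⟩ := List.mem_ofFn.mp (List.mem_rotate.mp hv)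
    exact hp j
  · exact (List.mem_singleton.mp hv) ▸ hp i

theorem rotList_comp (f : ℝ → ℝ) : rotList (f ∘ y) i = (rotList y i).map f := by
  simp [rotList, List.map_rotate, List.map_ofFn]

theorem head_rotList_eq_getLast : (rotList y i).head (rotList_ne_nil y i) =
    (rotList y i).getLast (rotList_ne_nil y i) := by
  have hL : (List.ofFn y).rotate i ≠ [] := by simpa using i.pos.ne'
  have := List.head?_rotate (l := List.ofFn y) (n := i) (by simp)
  simp only [rotList, List.head_append_of_ne_nil hL, List.getLast_append_singleton]
  rw [List.head?_eq_some_head hL] at this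
  simpa using this

end rotList

section signVariation

variable {n : ℕ} (x : Fin n → ℝ)

theorem replZeros_ne_zero (ε : Fin n → Bool) (j : Fin n) : replZeros x ε j ≠ 0 := by
  unfold replZeros
  split_ifs <;> simp_all

theorem replZeros_const_true :
    replZeros x (fun _ => true) = (fun v => if v = 0 then 1 else v) ∘ x := by
  funext j
  simp [replZeros]

/-- Replacing every zero by `1` only reinserts entries that `s⁻` deletes. -/
theorem sMinusC_le_sPlusC : sMinusC x ≤ sPlusC x := by
  refine Finset.sup_le fun i _ => ?_
  have hne := forall_mem_rotList _ i (p := (· ≠ 0)) (replZeros_ne_zero x fun _ => true)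
  calc sMinusList (rotList x i) ≤ signChanges (rotList (replZeros x fun _ => true) i) := by
        rw [replZeros_const_true, rotList_comp] at hne ⊢
        exact signChanges_mono (List.filter_ne_zero_sublist_map fun v hv => if_neg hv) hne
    _ ≤ sPlusC x := Finset.le_sup (f := fun p : (Fin n → Bool) × Fin n =>
        signChanges (rotList (replZeros x p.1) p.2)) (Finset.mem_univ ((fun _ => true), i))

theorem sPlusC_le : sPlusC x ≤ n := by
  refine Finset.sup_le fun p _ => ?_
  simpa [length_rotList] using signChanges_le_length_sub_one (rotList (replZeros x p.1) p.2)

theorem even_sPlusC : Even (sPlusC x) := by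
  refine Finset.sup_induction (by simp) (fun a ha b hb => ?_) fun p _ => ?_
  · rcases le_total a b with h | h
    · rwa [sup_of_le_right h]
    · rwa [sup_of_le_left h]
  · exact even_signChanges_of_head_eq_getLast (rotList_ne_nil _ p.2)
      (forall_mem_rotList _ p.2 (replZeros_ne_zero x p.1)) (head_rotList_eq_getLast _ p.2)

end signVariation

theorem Set.finite_and_ncard_le_half_of_injOn {α : Type*} {S : Set α} {g : α → ℕ} {n : ℕ}
    (hg : S.InjOn g) (hpos : ∀ t ∈ S, 0 < g t) (hle : ∀ t ∈ S, g t ≤ n)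
    (heven : ∀ t ∈ S, Even (g t)) : S.Finite ∧ S.ncard ≤ n / 2 := by
  have hmaps : Set.MapsTo (g · / 2) S (Finset.Icc 1 (n / 2) : Set ℕ) := fun t ht => by
    have := hpos t ht
    have := hle t ht
    obtain ⟨k, hk⟩ := heven t ht
    simp only [Finset.coe_Icc, Set.mem_Icc]
    omega
  have hinj : S.InjOn (g · / 2) := fun t₁ h₁ t₂ h₂ h => hg h₁ h₂ <| by
    rw [← Nat.div_two_mul_two_of_even (heven t₁ h₁), ← Nat.div_two_mul_two_of_even (heven t₂ h₂),
      show g t₁ / 2 = g t₂ / 2 from h]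
  refine ⟨Set.Finite.of_injOn hmaps hinj (Finset.finite_toSet _), ?_⟩
  calc S.ncard ≤ (Finset.Icc 1 (n / 2) : Set ℕ).ncard :=
        Set.ncard_le_ncard_of_injOn _ hmaps hinj (Finset.finite_toSet _)
    _ = n / 2 := by simp

theorem outside_Vc_finitely_often_general (n : ℕ) (a b : ℝ)
    (x : ℝ → Fin n → ℝ)
    (h : ∀ t₀ t : ℝ, a < t₀ → t₀ < t → t < b → sPlusC (x t) ≤ sMinusC (x t₀)) :
    (∀ t₀, t₀ ∈ Set.Ioo a b → sMinusC (x t₀) ≠ sPlusC (x t₀) →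
      ∀ t, t₀ < t → t < b → sPlusC (x t) < sPlusC (x t₀)) ∧
    ({t | t ∈ Set.Ioo a b ∧ sMinusC (x t) ≠ sPlusC (x t)}.Finite ∧
      {t | t ∈ Set.Ioo a b ∧ sMinusC (x t) ≠ sPlusC (x t)}.ncard ≤ n / 2) := by
  have hdecr : ∀ t₀, t₀ ∈ Set.Ioo a b → sMinusC (x t₀) ≠ sPlusC (x t₀) →
      ∀ t, t₀ < t → t < b → sPlusC (x t) < sPlusC (x t₀) := fun t₀ ht₀ hne t ht₀t htb =>
    (h t₀ t ht₀.1 ht₀t htb).trans_lt ((sMinusC_le_sPlusC _).lt_of_ne hne)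
  have hanti : StrictAntiOn (fun t => sPlusC (x t))
      {t | t ∈ Set.Ioo a b ∧ sMinusC (x t) ≠ sPlusC (x t)} :=
    fun t₁ h₁ t₂ h₂ hlt => hdecr t₁ h₁.1 h₁.2 t₂ hlt h₂.1.2
  exact ⟨hdecr, Set.finite_and_ncard_le_half_of_injOn hanti.injOn
    (fun t ht => (Nat.zero_le _).trans_lt ((sMinusC_le_sPlusC _).lt_of_ne ht.2))
    (fun t _ => sPlusC_le _) (fun t _ => even_sPlusC _)⟩

/-- If `x : (a,b) → ℝⁿ` is nonvanishing and satisfies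
`s_c⁺(x(t)) ≤ s_c⁻(x(t₀))` whenever `a < t₀ < t < b`, then `s_c⁺(x(·))`
strictly decreases after any point `t₀` with `x(t₀) ∉ V_c` (i.e. with
`s_c⁻(x(t₀)) ≠ s_c⁺(x(t₀))`); consequently, the set of points where
`x(t) ∉ V_c` has at most `⌊n/2⌋` elements. -/
theorem outside_Vc_finitely_often (n : ℕ) (a b : ℝ) (hab : a < b)
    (x : ℝ → Fin n → ℝ) (hx : ∀ t, t ∈ Set.Ioo a b → x t ≠ 0)
    (h : ∀ t₀ t : ℝ, a < t₀ → t₀ < t → t < b → sPlusC (x t) ≤ sMinusC (x t₀)) :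
    (∀ t₀, t₀ ∈ Set.Ioo a b → sMinusC (x t₀) ≠ sPlusC (x t₀) →
      ∀ t, t₀ < t → t < b → sPlusC (x t) < sPlusC (x t₀)) ∧
    ({t | t ∈ Set.Ioo a b ∧ sMinusC (x t) ≠ sPlusC (x t)}.Finite ∧
      {t | t ∈ Set.Ioo a b ∧ sMinusC (x t) ≠ sPlusC (x t)}.ncard ≤ n / 2) :=
  outside_Vc_finitely_often_general n a b x h
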